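/- arXiv:2405.16809 — 5 statements merged into one kernel-verified Lean document; each statement's English description precedes it below -/
import Mathlib

section
/- Let d, n ≥ 1 be integers, λ > 0 a real number, and θ⋆ ∈ ℝ^d. For each k ∈ {1,…,n} let A_k ∈ ℝ^d and γ_k, Δ_k ∈ ℝ, and set Y_k = ⟨A_k, θ⋆⟩ + γ_k + Δ_k. Define V = λ I_d + Σ_{t=1}^n A_t A_tᵀ (a positive definite, hence invertible, matrix), θ̂ = V⁻¹ Σ_{t=1}^n A_t Y_t, and ι = Σ_{t=1}^n A_t γ_t. Then ‖θ̂ − θ⋆‖_V ≤ √λ · ‖θ⋆‖₂ + (max_{k∈[n]} |Δ_k|) · √n + ‖ι‖_{V⁻¹}. -/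
open Matrix Finset

/-- Euclidean norm of a vector in `ℝ^d`. -/
noncomputable def euclNorm {d : ℕ} (x : Fin d → ℝ) : ℝ := Real.sqrt (x ⬝ᵥ x)

/-- Norm weighted by a (positive semidefinite) matrix `M`: `‖x‖_M = √(xᵀ M x)`. -/
noncomputable def mnorm {d : ℕ} (M : Matrix (Fin d) (Fin d) ℝ) (x : Fin d → ℝ) : ℝ :=
  Real.sqrt (x ⬝ᵥ M.mulVec x)

/-
With `B` the matrix of rows `A k`, `V = λ I + BᵀB` and `V (θ̂ - θ⋆) = -λ θ⋆ + Bᵀ Δ + ι`, while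
`‖θ̂ - θ⋆‖_V = ‖V (θ̂ - θ⋆)‖_{V⁻¹}`. By the triangle inequality for the `V⁻¹`-norm it remains to
bound two terms, using that `‖·‖_{V⁻¹}` is the dual norm of `‖·‖_V`: since `‖z‖_V` dominates both
`√λ ‖z‖₂` and `‖B z‖₂`, Cauchy–Schwarz gives `‖λ θ⋆‖_{V⁻¹} ≤ √λ ‖θ⋆‖₂` and
`‖Bᵀ Δ‖_{V⁻¹} ≤ ‖Δ‖₂ ≤ max |Δ k| · √n`.
-/

section EuclNorm

variable {d : ℕ}

lemma euclNorm_eq_norm (x : Fin d → ℝ) : euclNorm x = ‖WithLp.toLp 2 x‖ := by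
  simp [euclNorm, EuclideanSpace.norm_eq, dotProduct, sq]

lemma euclNorm_nonneg (x : Fin d → ℝ) : 0 ≤ euclNorm x := Real.sqrt_nonneg _

lemma abs_dotProduct_le_euclNorm_mul (x y : Fin d → ℝ) :
    |x ⬝ᵥ y| ≤ euclNorm x * euclNorm y := by
  simpa [euclNorm_eq_norm, EuclideanSpace.inner_eq_star_dotProduct, dotProduct_comm]
    using abs_real_inner_le_norm (WithLp.toLp 2 x) (WithLp.toLp 2 y)

lemma euclNorm_add_le (x y : Fin d → ℝ) : euclNorm (x + y) ≤ euclNorm x + euclNorm y := by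
  simpa [euclNorm_eq_norm] using norm_add_le (WithLp.toLp 2 x) (WithLp.toLp 2 y)

lemma euclNorm_le_mul_sqrt_of_abs_le {x : Fin d → ℝ} {c : ℝ} (hc : 0 ≤ c)
    (hx : ∀ i, |x i| ≤ c) : euclNorm x ≤ c * Real.sqrt d := by
  have hsum : x ⬝ᵥ x ≤ d * c ^ 2 := by
    calc x ⬝ᵥ x = ∑ i, |x i| ^ 2 := by simp [dotProduct, sq]
      _ ≤ ∑ _i : Fin d, c ^ 2 := sum_le_sum fun i _ => pow_le_pow_left₀ (abs_nonneg _) (hx i) 2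
      _ = d * c ^ 2 := by simp
  calc euclNorm x ≤ Real.sqrt (d * c ^ 2) := Real.sqrt_le_sqrt hsum
    _ = c * Real.sqrt d := by rw [Real.sqrt_mul' _ (sq_nonneg c), Real.sqrt_sq hc, mul_comm]

end EuclNorm

section MNorm

variable {d : ℕ} {M V : Matrix (Fin d) (Fin d) ℝ}

lemma mnorm_conjTranspose_mul_self (B : Matrix (Fin d) (Fin d) ℝ) (x : Fin d → ℝ) :
    mnorm (Bᴴ * B) x = euclNorm (B *ᵥ x) := by
  rw [mnorm, euclNorm, conjTranspose_eq_transpose_of_trivial, ← mulVec_mulVec,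
    dotProduct_mulVec, vecMul_transpose]

lemma mnorm_add_le (hM : M.PosSemidef) (x y : Fin d → ℝ) :
    mnorm M (x + y) ≤ mnorm M x + mnorm M y := by
  classical
  open scoped MatrixOrder in
  obtain ⟨B, rfl⟩ := CStarAlgebra.nonneg_iff_eq_star_mul_self.mp hM.nonneg
  simp only [star_eq_conjTranspose, mnorm_conjTranspose_mul_self, mulVec_add]
  exact euclNorm_add_le _ _

lemma sq_mnorm (hM : M.PosSemidef) (x : Fin d → ℝ) : mnorm M x ^ 2 = x ⬝ᵥ M *ᵥ x :=
  Real.sq_sqrt (by simpa using hM.dotProduct_mulVec_nonneg x)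

lemma mnorm_inv_mulVec (hV : IsUnit V.det) (y : Fin d → ℝ) :
    mnorm V⁻¹ (V *ᵥ y) = mnorm V y := by
  rw [mnorm, mnorm, mulVec_mulVec, nonsing_inv_mul _ hV, one_mulVec, dotProduct_comm]

lemma mnorm_inv_le_of_dotProduct_le (hV : V.PosDef) {x : Fin d → ℝ} {c : ℝ} (hc : 0 ≤ c)
    (h : ∀ z, x ⬝ᵥ z ≤ c * mnorm V z) : mnorm V⁻¹ x ≤ c := by
  have hdet : IsUnit V.det := hV.det_pos.ne'.isUnit
  -- With `z = V⁻¹ x`, both `‖x‖²_{V⁻¹}` and `‖z‖²_V` equal `⟨x, z⟩`.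
  set z := V⁻¹ *ᵥ x
  have hx : V *ᵥ z = x := by rw [mulVec_mulVec, mul_nonsing_inv _ hdet, one_mulVec]
  have hz : mnorm V z ^ 2 ≤ c * mnorm V z := by
    rw [sq_mnorm hV.posSemidef, hx, dotProduct_comm]
    exact h z
  rw [← hx, mnorm_inv_mulVec hdet]
  nlinarith [show 0 ≤ mnorm V z from Real.sqrt_nonneg _]

end MNorm

section RidgeGram

variable {d n : ℕ} (lam : ℝ) (B : Matrix (Fin n) (Fin d) ℝ)

noncomputable def ridgeGram : Matrix (Fin d) (Fin d) ℝ := lam • 1 + Bᵀ * B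

lemma dotProduct_ridgeGram_mulVec (z : Fin d → ℝ) :
    z ⬝ᵥ ridgeGram lam B *ᵥ z = lam * (z ⬝ᵥ z) + (B *ᵥ z) ⬝ᵥ (B *ᵥ z) := by
  rw [ridgeGram, add_mulVec, smul_mulVec, one_mulVec, ← mulVec_mulVec, dotProduct_add,
    dotProduct_smul, smul_eq_mul, dotProduct_mulVec, vecMul_transpose]

variable {lam}

lemma posDef_ridgeGram (hlam : 0 < lam) : (ridgeGram lam B).PosDef :=
  (PosDef.one.smul hlam).add_posSemidef (by
    simpa [conjTranspose_eq_transpose_of_trivial] using posSemidef_conjTranspose_mul_self B)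

lemma sqrt_mul_euclNorm_le_mnorm_ridgeGram (hlam : 0 ≤ lam) (z : Fin d → ℝ) :
    Real.sqrt lam * euclNorm z ≤ mnorm (ridgeGram lam B) z := by
  rw [euclNorm, ← Real.sqrt_mul hlam, mnorm, dotProduct_ridgeGram_mulVec]
  exact Real.sqrt_le_sqrt (le_add_of_nonneg_right (dotProduct_self_star_nonneg _))

lemma euclNorm_mulVec_le_mnorm_ridgeGram (hlam : 0 ≤ lam) (z : Fin d → ℝ) :
    euclNorm (B *ᵥ z) ≤ mnorm (ridgeGram lam B) z := by
  rw [euclNorm, mnorm, dotProduct_ridgeGram_mulVec]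
  exact Real.sqrt_le_sqrt (le_add_of_nonneg_left (mul_nonneg hlam (dotProduct_self_star_nonneg _)))

lemma mnorm_inv_ridgeGram_neg_smul_le (hlam : 0 < lam) (θ : Fin d → ℝ) :
    mnorm (ridgeGram lam B)⁻¹ (-(lam • θ)) ≤ Real.sqrt lam * euclNorm θ := by
  have hc : 0 ≤ Real.sqrt lam * euclNorm θ := mul_nonneg (Real.sqrt_nonneg _) (euclNorm_nonneg θ)
  refine mnorm_inv_le_of_dotProduct_le (posDef_ridgeGram B hlam) hc fun z => ?_
  calc -(lam • θ) ⬝ᵥ z = lam * -(θ ⬝ᵥ z) := by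
        rw [neg_dotProduct, smul_dotProduct, smul_eq_mul, mul_neg]
    _ ≤ lam * (euclNorm θ * euclNorm z) :=
        mul_le_mul_of_nonneg_left ((neg_le_abs _).trans (abs_dotProduct_le_euclNorm_mul θ z))
          hlam.le
    _ = Real.sqrt lam * euclNorm θ * (Real.sqrt lam * euclNorm z) := by
        rw [mul_mul_mul_comm, Real.mul_self_sqrt hlam.le]
    _ ≤ Real.sqrt lam * euclNorm θ * mnorm (ridgeGram lam B) z :=
        mul_le_mul_of_nonneg_left (sqrt_mul_euclNorm_le_mnorm_ridgeGram B hlam.le z) hc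

lemma mnorm_inv_ridgeGram_transpose_mulVec_le (hlam : 0 < lam) (v : Fin n → ℝ) :
    mnorm (ridgeGram lam B)⁻¹ (Bᵀ *ᵥ v) ≤ euclNorm v := by
  refine mnorm_inv_le_of_dotProduct_le (posDef_ridgeGram B hlam) (euclNorm_nonneg v) fun z => ?_
  calc Bᵀ *ᵥ v ⬝ᵥ z = v ⬝ᵥ B *ᵥ z := by rw [mulVec_transpose, dotProduct_mulVec]
    _ ≤ euclNorm v * euclNorm (B *ᵥ z) := (le_abs_self _).trans (abs_dotProduct_le_euclNorm_mul _ _)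
    _ ≤ euclNorm v * mnorm (ridgeGram lam B) z :=
        mul_le_mul_of_nonneg_left (euclNorm_mulVec_le_mnorm_ridgeGram B hlam.le z)
          (euclNorm_nonneg v)

end RidgeGram

lemma sum_vecMulVec_self_eq_transpose_mul {ι m R : Type*} [Fintype ι] [CommSemiring R]
    (A : ι → m → R) :
    ∑ t, vecMulVec (A t) (A t) = (of A)ᵀ * of A := by
  ext i j
  simp [Matrix.sum_apply, mul_apply, vecMulVec_apply]

theorem least_squares_error_decomposition_general
    {d n : ℕ} (hn : 1 ≤ n)
    (lam : ℝ) (hlam : 0 < lam)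
    (θstar : Fin d → ℝ) (A : Fin n → Fin d → ℝ) (γ Δ : Fin n → ℝ)
    (Y : Fin n → ℝ) (hY : ∀ k, Y k = A k ⬝ᵥ θstar + γ k + Δ k)
    (V : Matrix (Fin d) (Fin d) ℝ)
    (hV : V = lam • (1 : Matrix (Fin d) (Fin d) ℝ) + ∑ t, vecMulVec (A t) (A t))
    (θhat : Fin d → ℝ) (hθhat : θhat = V⁻¹.mulVec (∑ t, Y t • A t))
    (ι : Fin d → ℝ) (hι : ι = ∑ t, γ t • A t) :
    mnorm V (θhat - θstar) ≤
      Real.sqrt lam * euclNorm θstar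
        + (Finset.univ.sup' (Finset.univ_nonempty_iff.mpr ⟨⟨0, hn⟩⟩) fun k => |Δ k|)
            * Real.sqrt n
        + mnorm V⁻¹ ι := by
  set B : Matrix (Fin n) (Fin d) ℝ := of A
  have hVB : V = ridgeGram lam B := by rw [hV, sum_vecMulVec_self_eq_transpose_mul]; rfl
  have hVpd : V.PosDef := hVB ▸ posDef_ridgeGram B hlam
  have hdet : IsUnit V.det := hVpd.det_pos.ne'.isUnit
  have hrow (c : Fin n → ℝ) : ∑ t, c t • A t = Bᵀ *ᵥ c := by
    rw [mulVec_transpose, vecMul_eq_sum]; rfl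
  have hresidual : V *ᵥ (θhat - θstar) = -(lam • θstar) + Bᵀ *ᵥ Δ + ι := by
    have hYB : Y = B *ᵥ θstar + γ + Δ := funext hY
    rw [mulVec_sub, hθhat, mulVec_mulVec, mul_nonsing_inv _ hdet, one_mulVec, hrow, hYB, hι, hrow,
      hVB, ridgeGram, add_mulVec, smul_mulVec, one_mulVec, ← mulVec_mulVec, mulVec_add, mulVec_add]
    abel
  set m := univ.sup' (univ_nonempty_iff.mpr ⟨⟨0, hn⟩⟩) fun k => |Δ k|
  have hm (k : Fin n) : |Δ k| ≤ m := le_sup' (fun k => |Δ k|) (mem_univ k)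
  have hΔ : euclNorm Δ ≤ m * √n :=
    euclNorm_le_mul_sqrt_of_abs_le ((abs_nonneg _).trans (hm ⟨0, hn⟩)) hm
  have hVinv : V⁻¹.PosSemidef := hVpd.inv.posSemidef
  calc mnorm V (θhat - θstar) = mnorm V⁻¹ (-(lam • θstar) + Bᵀ *ᵥ Δ + ι) := by
        rw [← hresidual, mnorm_inv_mulVec hdet]
    _ ≤ mnorm V⁻¹ (-(lam • θstar)) + mnorm V⁻¹ (Bᵀ *ᵥ Δ) + mnorm V⁻¹ ι :=
        (mnorm_add_le hVinv _ _).trans (add_le_add_left (mnorm_add_le hVinv _ _) _)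
    _ ≤ _ := by
        rw [hVB]
        gcongr
        · exact mnorm_inv_ridgeGram_neg_smul_le B hlam θstar
        · exact (mnorm_inv_ridgeGram_transpose_mulVec_le B hlam Δ).trans hΔ

/-- Least-squares error decomposition (Lemma: Least-squares Error Decomposition). -/
theorem least_squares_error_decomposition
    {d n : ℕ} (hd : 1 ≤ d) (hn : 1 ≤ n)
    (lam : ℝ) (hlam : 0 < lam)
    (θstar : Fin d → ℝ) (A : Fin n → Fin d → ℝ) (γ Δ : Fin n → ℝ)
    (Y : Fin n → ℝ) (hY : ∀ k, Y k = A k ⬝ᵥ θstar + γ k + Δ k)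
    (V : Matrix (Fin d) (Fin d) ℝ)
    (hV : V = lam • (1 : Matrix (Fin d) (Fin d) ℝ) + ∑ t, vecMulVec (A t) (A t))
    (θhat : Fin d → ℝ) (hθhat : θhat = V⁻¹.mulVec (∑ t, Y t • A t))
    (ι : Fin d → ℝ) (hι : ι = ∑ t, γ t • A t) :
    mnorm V (θhat - θstar) ≤
      Real.sqrt lam * euclNorm θstar
        + (Finset.univ.sup' (Finset.univ_nonempty_iff.mpr ⟨⟨0, hn⟩⟩) fun k => |Δ k|)
            * Real.sqrt n
        + mnorm V⁻¹ ι :=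
  least_squares_error_decomposition_general hn lam hlam θstar A γ Δ Y hY V hV θhat hθhat ι hι
end

section
/- Consider a finite-horizon MDP as described in the context, let ω : ∪_{h} S_h → [0,1] be a function with ω ≡ 0 on S_1 and on S_{H+1}, and let π⁰ and ρ be arbitrary memoryless policies. Define the policy π⋆ by backward recursion over stages h = H+1, H, …, 1: for s ∈ S_h, π⋆(a|s) = ω(s)·π⁰(a|s) + (1−ω(s))·𝟙{a = a⋆(s)}, where a⋆(s) is a maximizer over a ∈ A of q^{π⋆}_h(s,a) (which depends only on the already-defined values of π⋆ at stages later than h). Define the policy π† by π†(a|s) = ω(s)·π⁰(a|s) + (1−ω(s))·ρ(a|s). Then for every stage h ∈ {1,…,H+1} and every state s ∈ S_h, v^{π⋆}_h(s) ≥ v^{π†}_h(s). (In the paper, ρ is instantiated as an optimal policy of the MDP.) -/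
open Finset

/-- Skipping-based policy improvement (Lemma `pidag-worse` of the paper):
in a finite-horizon MDP, the policy `πs` that at each state mixes (with weight `ω`)
the policy `π0` with the greedy action for its own action-value function dominates,
at every state, the policy `πd` that mixes `π0` with an arbitrary policy `ρ` with
the same weights.  Stages `1, …, H+1` are indexed by `Fin (H+1)`; a stage
`h ∈ {1, …, H}` is represented by `h : Fin H`, viewed as a non-terminal stage via
`Fin.castSucc` and whose successor stage is `Fin.succ h`.  Value functions are
given by their defining backward recursions.  -/
theorem skipping_policy_improvement
    (H : ℕ) (hH : 1 ≤ H)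
    (S : Fin (H + 1) → Type) [∀ h, Fintype (S h)] [∀ h, Nonempty (S h)]
    (A : Type) [Fintype A] [Nonempty A] [DecidableEq A]
    -- transition kernel
    (P : ∀ h : Fin H, S h.castSucc → A → S h.succ → ℝ)
    (hPnonneg : ∀ h s a s', 0 ≤ P h s a s')
    (hPsum : ∀ h s a, ∑ s', P h s a s' = 1)
    -- rewards
    (r : ∀ h : Fin H, S h.castSucc → A → ℝ)
    (hr0 : ∀ h s a, 0 ≤ r h s a) (hr1 : ∀ h s a, r h s a ≤ 1)
    -- skipping probabilities, vanishing at the first and last stage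
    (ω : ∀ h : Fin (H + 1), S h → ℝ)
    (hω0 : ∀ h s, 0 ≤ ω h s) (hω1 : ∀ h s, ω h s ≤ 1)
    (hωfirst : ∀ s : S 0, ω 0 s = 0)
    (hωlast : ∀ s : S (Fin.last H), ω (Fin.last H) s = 0)
    -- the base policy π⁰ and the arbitrary policy ρ
    (π0 : ∀ h : Fin (H + 1), S h → A → ℝ)
    (hπ0nonneg : ∀ h s a, 0 ≤ π0 h s a) (hπ0sum : ∀ h s, ∑ a, π0 h s a = 1)
    (ρ : ∀ h : Fin (H + 1), S h → A → ℝ)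
    (hρnonneg : ∀ h s a, 0 ≤ ρ h s a) (hρsum : ∀ h s, ∑ a, ρ h s a = 1)
    -- the recursively defined policy π⋆ with its value functions q⋆, v⋆
    (πs : ∀ h : Fin (H + 1), S h → A → ℝ)
    (qs : ∀ h : Fin H, S h.castSucc → A → ℝ)
    (vs : ∀ h : Fin (H + 1), S h → ℝ)
    (hvs_last : ∀ s : S (Fin.last H), vs (Fin.last H) s = 0)
    (hqs : ∀ h s a, qs h s a = r h s a + ∑ s', P h s a s' * vs h.succ s')
    (hvs : ∀ (h : Fin H) (s : S h.castSucc),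
      vs h.castSucc s = ∑ a, πs h.castSucc s a * qs h s a)
    (hπs : ∀ (h : Fin H) (s : S h.castSucc), ∃ astar : A,
      (∀ a, qs h s a ≤ qs h s astar) ∧
      ∀ a, πs h.castSucc s a =
        ω h.castSucc s * π0 h.castSucc s a
          + (1 - ω h.castSucc s) * (if a = astar then 1 else 0))
    -- the policy π† with its value functions q†, v†
    (πd : ∀ h : Fin (H + 1), S h → A → ℝ)
    (hπd : ∀ h s a, πd h s a = ω h s * π0 h s a + (1 - ω h s) * ρ h s a)
    (qd : ∀ h : Fin H, S h.castSucc → A → ℝ)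
    (vd : ∀ h : Fin (H + 1), S h → ℝ)
    (hvd_last : ∀ s : S (Fin.last H), vd (Fin.last H) s = 0)
    (hqd : ∀ h s a, qd h s a = r h s a + ∑ s', P h s a s' * vd h.succ s')
    (hvd : ∀ (h : Fin H) (s : S h.castSucc),
      vd h.castSucc s = ∑ a, πd h.castSucc s a * qd h s a) :
    ∀ (h : Fin (H + 1)) (s : S h), vd h s ≤ vs h s := by
  intro h
  induction h using Fin.reverseInduction with
  | last => intro s; rw [hvd_last, hvs_last]
  | cast h ih =>
    intro s
    have hωnn := hω0 h.castSucc s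
    have hω1' : 0 ≤ 1 - ω h.castSucc s := by linarith [hω1 h.castSucc s]
    have hq : ∀ a, qd h s a ≤ qs h s a := by
      intro a
      rw [hqd, hqs]
      have : ∑ s', P h s a s' * vd h.succ s' ≤ ∑ s', P h s a s' * vs h.succ s' :=
        Finset.sum_le_sum fun s' _ =>
          mul_le_mul_of_nonneg_left (ih s') (hPnonneg h s a s')
      linarith
    obtain ⟨astar, hmax, hpi⟩ := hπs h s
    have hπdnn : ∀ a, 0 ≤ πd h.castSucc s a := by
      intro a
      rw [hπd]
      have h1 : 0 ≤ ω h.castSucc s * π0 h.castSucc s a :=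
        mul_nonneg hωnn (hπ0nonneg _ _ _)
      have h2 : 0 ≤ (1 - ω h.castSucc s) * ρ h.castSucc s a :=
        mul_nonneg hω1' (hρnonneg _ _ _)
      linarith
    rw [hvd h s, hvs h s]
    have step1 : ∑ a, πd h.castSucc s a * qd h s a
        ≤ ∑ a, πd h.castSucc s a * qs h s a :=
      Finset.sum_le_sum fun a _ => mul_le_mul_of_nonneg_left (hq a) (hπdnn a)
    have expand_d : ∑ a, πd h.castSucc s a * qs h s a
        = ω h.castSucc s * ∑ a, π0 h.castSucc s a * qs h s a
          + (1 - ω h.castSucc s) * ∑ a, ρ h.castSucc s a * qs h s a := by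
      simp only [hπd, add_mul, Finset.sum_add_distrib, Finset.mul_sum, mul_assoc]
    have expand_s : ∑ a, πs h.castSucc s a * qs h s a
        = ω h.castSucc s * ∑ a, π0 h.castSucc s a * qs h s a
          + (1 - ω h.castSucc s) * qs h s astar := by
      simp only [hpi, add_mul, Finset.sum_add_distrib, Finset.mul_sum, mul_assoc,
        ite_mul, one_mul, zero_mul]
      congr 1
      rw [← Finset.mul_sum]
      congr 1
      simp
    have hρle : ∑ a, ρ h.castSucc s a * qs h s a ≤ qs h s astar := by
      calc ∑ a, ρ h.castSucc s a * qs h s a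
          ≤ ∑ a, ρ h.castSucc s a * qs h s astar :=
            Finset.sum_le_sum fun a _ =>
              mul_le_mul_of_nonneg_left (hmax a) (hρnonneg _ _ a)
        _ = qs h s astar := by rw [← Finset.sum_mul, hρsum, one_mul]
    have step2 : ∑ a, πd h.castSucc s a * qs h s a
        ≤ ∑ a, πs h.castSucc s a * qs h s a := by
      rw [expand_d, expand_s]
      have := mul_le_mul_of_nonneg_left hρle hω1'
      linarith
    linarith
end

section
/- Let H ≥ 1 be an integer, h ∈ {1,…,H}, and c ≥ 0 a real number. Let r_t ∈ [0,1] for t ∈ {h,…,H}; let v_t, ṽ_t ∈ [0,H] for t ∈ {h+1,…,H+1}; let ω_t, ω̃_t ∈ [0,1] for t ∈ {h+1,…,H}, with the convention ω_{H+1} = ω̃_{H+1} = 0; and let κ_t ≥ 0 for t ∈ {h+1,…,H+1}. Assume |ω_t − ω̃_t| ≤ c for all t ∈ {h+1,…,H+1} and |v_t − ṽ_t| ≤ κ_t for all t ∈ {h+1,…,H+1}. Define E_t for t = H, H−1, …, h by backward recursion: E_H = r_H + v_{H+1}, and E_t = r_t + (1 − ω_{t+1}) v_{t+1} + ω_{t+1}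 E_{t+1} for t < H; define Ẽ_t analogously using the same rewards r_t but with ω̃ and ṽ in place of ω and v. Then |E_h − Ẽ_h| ≤ 3Hc·(H − h + 1) + Σ_{t=h+1}^{H+1} κ_t. -/
open Finset

set_option maxHeartbeats 1000000

/-- Deterministic recursion underlying the covering argument for skipping
distributions: the skipped-sum targets `E` and `Ẽ` built from the same rewards
but perturbed skipping probabilities (`|ω_t − ω̃_t| ≤ c`) and perturbed value
approximations (`|v_t − ṽ_t| ≤ κ_t`) differ by at most
`3Hc(H − h + 1) + Σ_{t=h+1}^{H+1} κ_t`. -/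
theorem skipped_target_perturbation_bound
    (H h : ℕ) (hH : 1 ≤ H) (hh1 : 1 ≤ h) (hhH : h ≤ H)
    (c : ℝ) (hc : 0 ≤ c)
    (r : ℕ → ℝ) (hr0 : ∀ t, h ≤ t → t ≤ H → 0 ≤ r t) (hr1 : ∀ t, h ≤ t → t ≤ H → r t ≤ 1)
    (v vt : ℕ → ℝ)
    (hv0 : ∀ t ∈ Finset.Icc (h + 1) (H + 1), 0 ≤ v t)
    (hv1 : ∀ t ∈ Finset.Icc (h + 1) (H + 1), v t ≤ H)
    (hvt0 : ∀ t ∈ Finset.Icc (h + 1) (H + 1), 0 ≤ vt t)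
    (hvt1 : ∀ t ∈ Finset.Icc (h + 1) (H + 1), vt t ≤ H)
    (ω ωt : ℕ → ℝ)
    (hω0 : ∀ t ∈ Finset.Icc (h + 1) H, 0 ≤ ω t)
    (hω1 : ∀ t ∈ Finset.Icc (h + 1) H, ω t ≤ 1)
    (hωt0 : ∀ t ∈ Finset.Icc (h + 1) H, 0 ≤ ωt t)
    (hωt1 : ∀ t ∈ Finset.Icc (h + 1) H, ωt t ≤ 1)
    (hωlast : ω (H + 1) = 0) (hωtlast : ωt (H + 1) = 0)
    (κ : ℕ → ℝ) (hκ : ∀ t ∈ Finset.Icc (h + 1) (H + 1), 0 ≤ κ t)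
    (hωclose : ∀ t ∈ Finset.Icc (h + 1) (H + 1), |ω t - ωt t| ≤ c)
    (hvclose : ∀ t ∈ Finset.Icc (h + 1) (H + 1), |v t - vt t| ≤ κ t)
    (E Et : ℕ → ℝ)
    (hEH : E H = r H + v (H + 1))
    (hE : ∀ t, h ≤ t → t < H → E t = r t + (1 - ω (t + 1)) * v (t + 1) + ω (t + 1) * E (t + 1))
    (hEtH : Et H = r H + vt (H + 1))
    (hEt : ∀ t, h ≤ t → t < H →
      Et t = r t + (1 - ωt (t + 1)) * vt (t + 1) + ωt (t + 1) * Et (t + 1)) :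
    |E h - Et h| ≤ 3 * H * c * ((H : ℝ) - h + 1) + ∑ t ∈ Finset.Icc (h + 1) (H + 1), κ t := by
  have key : ∀ d t : ℕ, h ≤ t → t ≤ H → H - t = d →
      (0 ≤ Et t ∧ Et t ≤ ((H : ℝ) - t + 1) + H) ∧
      |E t - Et t| ≤ 3 * H * c * ((H : ℝ) - t + 1) + ∑ s ∈ Finset.Icc (t + 1) (H + 1), κ s := by
    intro d
    induction d with
    | zero =>
      intro t ht htH hd
      have htH' : t = H := by omega
      subst htH'
      have hmem : t + 1 ∈ Finset.Icc (h + 1) (t + 1) := by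
        simp [Finset.mem_Icc]; omega
      have hs : ∑ s ∈ Finset.Icc (t + 1) (t + 1), κ s = κ (t + 1) := by simp
      have h1 : |E t - Et t| = |v (t + 1) - vt (t + 1)| := by
        rw [hEH, hEtH]; ring_nf
      have hcast : 1 ≤ (t : ℝ) := by exact_mod_cast hH
      refine ⟨⟨by rw [hEtH]; have := hr0 t hhH le_rfl; have := hvt0 _ hmem; linarith,
        by rw [hEtH]; have := hr1 t hhH le_rfl; have := hvt1 _ hmem; push_cast; linarith⟩, ?_⟩
      rw [hs, h1]
      have := hvclose _ hmem
      nlinarith [this, hc, hcast]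
    | succ d ih =>
      intro t ht htH hd
      have htlt : t < H := by omega
      have ih' := ih (t + 1) (by omega) (by omega) (by omega)
      obtain ⟨⟨hA0, hA1⟩, hdiff⟩ := ih'
      have hmemω : t + 1 ∈ Finset.Icc (h + 1) H := by simp [Finset.mem_Icc]; omega
      have hmemv : t + 1 ∈ Finset.Icc (h + 1) (H + 1) := by simp [Finset.mem_Icc]; omega
      have hE' := hE t ht htlt
      have hEt' := hEt t ht htlt
      have hcast : 1 ≤ (H : ℝ) := by exact_mod_cast hH
      have hcastt : (t : ℝ) ≤ H := by exact_mod_cast htH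
      have hcastt1 : (t : ℝ) + 1 ≤ H := by exact_mod_cast htlt
      have ht0 : (0:ℝ) ≤ t := by positivity
      have hr0' := hr0 t ht htlt.le
      have hr1' := hr1 t ht htlt.le
      have hv0' := hv0 _ hmemv
      have hv1' := hv1 _ hmemv
      have hvt0' := hvt0 _ hmemv
      have hvt1' := hvt1 _ hmemv
      have hω0' := hω0 _ hmemω
      have hω1' := hω1 _ hmemω
      have hωt0' := hωt0 _ hmemω
      have hωt1' := hωt1 _ hmemω
      have hωc := hωclose _ hmemv
      have hvc := hvclose _ hmemv
      have hκ' := hκ _ hmemv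
      -- cast of t+1
      push_cast at hA1
      constructor
      · constructor
        · rw [hEt']; nlinarith
        · rw [hEt']; nlinarith
      · -- split the sum
        have hsplit : ∑ s ∈ Finset.Icc (t + 1) (H + 1), κ s
            = κ (t + 1) + ∑ s ∈ Finset.Icc (t + 2) (H + 1), κ s := by
          have : Finset.Icc (t + 1) (H + 1) = insert (t + 1) (Finset.Icc (t + 2) (H + 1)) := by
            ext x; simp [Finset.mem_Icc, Finset.mem_insert]; omega
          rw [this, Finset.sum_insert (by simp [Finset.mem_Icc])]
        rw [hsplit]
        have hident : E t - Et t =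
            (1 - ω (t+1)) * (v (t+1) - vt (t+1)) + (ωt (t+1) - ω (t+1)) * vt (t+1)
            + ω (t+1) * (E (t+1) - Et (t+1)) + (ω (t+1) - ωt (t+1)) * Et (t+1) := by
          rw [hE', hEt']; ring
        have b1 : |(1 - ω (t+1)) * (v (t+1) - vt (t+1))| ≤ κ (t+1) := by
          rw [abs_mul]
          calc |1 - ω (t+1)| * |v (t+1) - vt (t+1)| ≤ 1 * κ (t+1) := by
                apply mul_le_mul _ hvc (abs_nonneg _) zero_le_one
                rw [abs_le]; constructor <;> linarith
            _ = κ (t+1) := one_mul _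
        have b2 : |(ωt (t+1) - ω (t+1)) * vt (t+1)| ≤ c * H := by
          rw [abs_mul]
          apply mul_le_mul (by rw [abs_sub_comm]; exact hωc) _ (abs_nonneg _) hc
          rw [abs_le]; constructor <;> linarith
        have b3 : |ω (t+1) * (E (t+1) - Et (t+1))| ≤ |E (t+1) - Et (t+1)| := by
          rw [abs_mul]
          calc |ω (t+1)| * |E (t+1) - Et (t+1)| ≤ 1 * |E (t+1) - Et (t+1)| := by
                apply mul_le_mul_of_nonneg_right _ (abs_nonneg _)
                rw [abs_le]; constructor <;> linarith
            _ = _ := one_mul _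
        have b4 : |(ω (t+1) - ωt (t+1)) * Et (t+1)| ≤ c * (2 * H) := by
          rw [abs_mul]
          apply mul_le_mul hωc _ (abs_nonneg _) hc
          rw [abs_le]; constructor <;> linarith
        have hstep : |E t - Et t| ≤ |E (t+1) - Et (t+1)| + κ (t+1) + 3 * H * c := by
          rw [hident]
          calc |(1 - ω (t+1)) * (v (t+1) - vt (t+1)) + (ωt (t+1) - ω (t+1)) * vt (t+1)
              + ω (t+1) * (E (t+1) - Et (t+1)) + (ω (t+1) - ωt (t+1)) * Et (t+1)|
              ≤ |(1 - ω (t+1)) * (v (t+1) - vt (t+1)) + (ωt (t+1) - ω (t+1)) * vt (t+1)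
              + ω (t+1) * (E (t+1) - Et (t+1))| + |(ω (t+1) - ωt (t+1)) * Et (t+1)| :=
                abs_add_le _ _
            _ ≤ (|(1 - ω (t+1)) * (v (t+1) - vt (t+1)) + (ωt (t+1) - ω (t+1)) * vt (t+1)|
              + |ω (t+1) * (E (t+1) - Et (t+1))|) + |(ω (t+1) - ωt (t+1)) * Et (t+1)| := by
                gcongr; exact abs_add_le _ _
            _ ≤ ((|(1 - ω (t+1)) * (v (t+1) - vt (t+1))| + |(ωt (t+1) - ω (t+1)) * vt (t+1)|)
              + |ω (t+1) * (E (t+1) - Et (t+1))|) + |(ω (t+1) - ωt (t+1)) * Et (t+1)| := by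
                gcongr; exact abs_add_le _ _
            _ ≤ |E (t+1) - Et (t+1)| + κ (t+1) + 3 * H * c := by
                have := b1; have := b2; have := b3; have := b4; linarith
        have hring : 3 * (H:ℝ) * c * ((H:ℝ) - t + 1)
            = 3 * (H:ℝ) * c * ((H:ℝ) - (t + 1) + 1) + 3 * H * c := by ring
        have hdiff2 := hdiff
        push_cast at hdiff2
        rw [show t + 1 + 1 = t + 2 from rfl] at hdiff2
        linarith [hstep, hdiff2, hring]
  exact (key (H - h) h le_rfl hhH rfl).2
end

section
/- Let d, n ≥ 1 be integers, λ > 0 and L > 0 real numbers, and let φ_1, …, φ_n ∈ ℝ^d satisfy ‖φ_j‖₂ ≤ L for all j. Define X = λ I_d + Σ_{j=1}^n φ_j φ_jᵀ. Then Σ_{j=1}^n min{1, ‖φ_j‖²_{X⁻¹}} ≤ 2d · log((dλ + nL²)/(dλ)). -/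
open Matrix Finset

/-! With `μᵢ` the eigenvalues of `X`,
`Σⱼ φⱼᵀ X⁻¹ φⱼ = tr (X⁻¹ (X - λ I)) = d - λ tr X⁻¹ = Σᵢ (1 - λ/μᵢ)`.
Since `1 - 1/x ≤ log x`, this is at most `Σᵢ log (μᵢ/λ)`, hence by concavity of `log` at most
`d log (tr X / (d λ))`, and `tr X = d λ + Σⱼ ‖φⱼ‖² ≤ d λ + n L²`. Each `min` is bounded by its
second argument, so the claim holds even with the constant `1` in place of `2`. -/

theorem Real.sum_log_le_card_mul_log {ι : Type*} [Fintype ι] {x : ι → ℝ} (hx : ∀ i, 0 < x i)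
    {T : ℝ} (hT : ∑ i, x i ≤ T) :
    ∑ i, Real.log (x i) ≤ Fintype.card ι * Real.log (T / Fintype.card ι) := by
  rcases isEmpty_or_nonempty ι with _ | _
  · simp
  have hc : (0 : ℝ) < Fintype.card ι := by exact_mod_cast Fintype.card_pos
  have jensen := strictConcaveOn_log_Ioi.concaveOn.le_map_sum (t := univ)
    (w := fun _ => (Fintype.card ι : ℝ)⁻¹) (p := x) (fun _ _ => by positivity)
    (by simp [hc.ne']) (fun i _ => hx i)
  simp only [smul_eq_mul, ← mul_sum] at jensen
  calc ∑ i, Real.log (x i) = Fintype.card ι * ((Fintype.card ι : ℝ)⁻¹ * ∑ i, Real.log (x i)) := by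
        field_simp
    _ ≤ Fintype.card ι * Real.log ((Fintype.card ι : ℝ)⁻¹ * ∑ i, x i) := by gcongr
    _ ≤ Fintype.card ι * Real.log (T / Fintype.card ι) := by
        gcongr
        · exact mul_pos (by positivity) (sum_pos (fun i _ => hx i) univ_nonempty)
        · rw [inv_mul_eq_div]; gcongr

namespace Matrix

variable {ι κ : Type*} [Fintype ι]

theorem trace_mul_vecMulVec {R : Type*} [CommSemiring R] (A : Matrix ι ι R) (v w : ι → R) :
    (A * vecMulVec v w).trace = w ⬝ᵥ A *ᵥ v := by
  rw [mul_vecMulVec, trace_vecMulVec, dotProduct_comm]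

variable [DecidableEq ι]

theorem posDef_smul_one_add_sum_vecMulVec [Fintype κ] {lam : ℝ} (hlam : 0 < lam)
    (φ : κ → ι → ℝ) : (lam • (1 : Matrix ι ι ℝ) + ∑ j, vecMulVec (φ j) (φ j)).PosDef :=
  (PosDef.one.smul hlam).add_posSemidef <|
    posSemidef_sum _ fun j _ => by simpa using posSemidef_vecMulVec_self_star (φ j)

theorem IsHermitian.trace_cfc {A : Matrix ι ι ℝ} (hA : A.IsHermitian) (f : ℝ → ℝ) :
    (cfc f A).trace = ∑ i, f (hA.eigenvalues i) := by
  rw [hA.cfc_eq, IsHermitian.cfc, Unitary.conjStarAlgAut_apply, trace_mul_cycle,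
    Unitary.coe_star_mul_self, one_mul, trace_diagonal]
  rfl

theorem PosDef.trace_inv {A : Matrix ι ι ℝ} (hA : A.PosDef) :
    A⁻¹.trace = ∑ i, (hA.isHermitian.eigenvalues i)⁻¹ := by
  rw [nonsing_inv_eq_ringInverse,
    ← cfc_ringInverse_id (R := ℝ) A hA.isUnit hA.isHermitian.isSelfAdjoint,
    hA.isHermitian.trace_cfc]

theorem sum_dotProduct_inv_mulVec_eq [Fintype κ] {X : Matrix ι ι ℝ} (hX : IsUnit X.det)
    (lam : ℝ) (φ : κ → ι → ℝ) (hXφ : X = lam • 1 + ∑ j, vecMulVec (φ j) (φ j)) :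
    ∑ j, φ j ⬝ᵥ X⁻¹ *ᵥ φ j = Fintype.card ι - lam * X⁻¹.trace := by
  have hsum : ∑ j, vecMulVec (φ j) (φ j) = X - lam • 1 := by rw [hXφ]; abel
  simp_rw [← trace_mul_vecMulVec]
  rw [← trace_sum, ← Matrix.mul_sum, hsum, Matrix.mul_sub, nonsing_inv_mul X hX,
    Matrix.mul_smul, mul_one, trace_sub, trace_smul, trace_one, smul_eq_mul]

theorem PosDef.card_sub_mul_trace_inv_le {X : Matrix ι ι ℝ} (hX : X.PosDef) {lam T : ℝ}
    (hlam : 0 < lam) (hT : X.trace ≤ T) :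
    Fintype.card ι - lam * X⁻¹.trace ≤
      Fintype.card ι * Real.log (T / (Fintype.card ι * lam)) := by
  set μ := hX.isHermitian.eigenvalues
  have hμ : ∀ i, 0 < μ i / lam := fun i => div_pos (hX.eigenvalues_pos i) hlam
  have hμT : ∑ i, μ i / lam ≤ T / lam := by
    rw [← sum_div]
    gcongr
    simpa [hX.isHermitian.trace_eq_sum_eigenvalues] using hT
  calc (Fintype.card ι : ℝ) - lam * X⁻¹.trace = ∑ i, (1 - (μ i / lam)⁻¹) := by
        simp [hX.trace_inv, mul_sum, sum_sub_distrib, div_eq_mul_inv, μ]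
    _ ≤ ∑ i, Real.log (μ i / lam) :=
        sum_le_sum fun i _ => Real.one_sub_inv_le_log_of_pos (hμ i)
    _ ≤ Fintype.card ι * Real.log (T / (Fintype.card ι * lam)) := by
        rw [mul_comm _ lam, ← div_div]
        exact Real.sum_log_le_card_mul_log hμ hμT

end Matrix

theorem dotProduct_self_le_sq_of_euclNorm_le {d : ℕ} {x : Fin d → ℝ} {L : ℝ}
    (hx : euclNorm x ≤ L) : x ⬝ᵥ x ≤ L ^ 2 :=
  (Real.sqrt_le_iff.mp hx).2

theorem elliptical_potential_final_matrix_general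
    {d n : ℕ}
    (lam L : ℝ) (hlam : 0 < lam)
    (φ : Fin n → Fin d → ℝ) (hφ : ∀ j, euclNorm (φ j) ≤ L)
    (X : Matrix (Fin d) (Fin d) ℝ)
    (hX : X = lam • (1 : Matrix (Fin d) (Fin d) ℝ) + ∑ j, vecMulVec (φ j) (φ j)) :
    ∑ j, min 1 ((mnorm X⁻¹ (φ j)) ^ 2) ≤
      2 * d * Real.log ((d * lam + n * L ^ 2) / (d * lam)) := by
  have hXpd : X.PosDef := hX ▸ posDef_smul_one_add_sum_vecMulVec hlam φ
  have hmnorm : ∀ j, mnorm X⁻¹ (φ j) ^ 2 = φ j ⬝ᵥ X⁻¹ *ᵥ φ j := fun j =>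
    Real.sq_sqrt (by simpa using hXpd.inv.posSemidef.dotProduct_mulVec_nonneg (φ j))
  have htrace : X.trace ≤ d * lam + n * L ^ 2 := by
    rw [hX, trace_add, trace_smul, trace_one, trace_sum, Fintype.card_fin, smul_eq_mul]
    simpa [trace_vecMulVec, mul_comm] using
      sum_le_sum fun j (_ : j ∈ univ) => dotProduct_self_le_sq_of_euclNorm_le (hφ j)
  have hlog : 0 ≤ (d : ℝ) * Real.log ((d * lam + n * L ^ 2) / (d * lam)) := by
    rcases Nat.eq_zero_or_pos d with rfl | hd
    · simp
    refine mul_nonneg d.cast_nonneg (Real.log_nonneg ?_)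
    rw [one_le_div (by positivity)]
    nlinarith [sq_nonneg L, (n.cast_nonneg : (0 : ℝ) ≤ n)]
  calc ∑ j, min 1 (mnorm X⁻¹ (φ j) ^ 2) ≤ ∑ j, φ j ⬝ᵥ X⁻¹ *ᵥ φ j :=
        sum_le_sum fun j _ => hmnorm j ▸ min_le_right _ _
    _ = d - lam * X⁻¹.trace := by
        simpa using sum_dotProduct_inv_mulVec_eq hXpd.det_pos.ne'.isUnit lam φ hX
    _ ≤ d * Real.log ((d * lam + n * L ^ 2) / (d * lam)) := by
        simpa using hXpd.card_sub_mul_trace_inv_le hlam htrace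
    _ ≤ 2 * d * Real.log ((d * lam + n * L ^ 2) / (d * lam)) := by linarith

/-- Final-matrix form of the elliptical potential lemma:
`Σ_j min{1, ‖φ_j‖²_{X⁻¹}} ≤ 2d log((dλ + nL²)/(dλ))` for
`X = λ I + Σ_j φ_j φ_jᵀ`. -/
theorem elliptical_potential_final_matrix
    {d n : ℕ} (hd : 1 ≤ d) (hn : 1 ≤ n)
    (lam L : ℝ) (hlam : 0 < lam) (hL : 0 < L)
    (φ : Fin n → Fin d → ℝ) (hφ : ∀ j, euclNorm (φ j) ≤ L)
    (X : Matrix (Fin d) (Fin d) ℝ)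
    (hX : X = lam • (1 : Matrix (Fin d) (Fin d) ℝ) + ∑ j, vecMulVec (φ j) (φ j)) :
    ∑ j, min 1 ((mnorm X⁻¹ (φ j)) ^ 2) ≤
      2 * d * Real.log ((d * lam + n * L ^ 2) / (d * lam)) :=
  elliptical_potential_final_matrix_general lam L hlam φ hφ X hX
end

section
/- Let d ≥ 1 be an integer, c ≥ 0 a real number, X a symmetric positive definite d×d real matrix, and Θ, Θ' nonempty compact subsets of ℝ^d such that: for every θ ∈ Θ there exists θ' ∈ Θ' with ‖θ − θ'‖_X ≤ c, and for every θ' ∈ Θ' there exists θ ∈ Θ with ‖θ − θ'‖_X ≤ c. Then for every u ∈ ℝ^d: (i) | max_{θ∈Θ} ⟨u, θ⟩ − max_{θ'∈Θ'} ⟨u, θ'⟩ | ≤ c·‖u‖_{X⁻¹}; (ii) | min_{θ∈Θ} ⟨u, θ⟩ − min_{θ'∈Θ'} ⟨u, θ'⟩ | ≤ c·‖u‖_{X⁻¹}; and (iii) for every H ≥ 0, | ( max_{θ∈Θ} clip_{[0,H]}⟨u, θ⟩ − min_{θ∈Θ} clip_{[0,H]}⟨u, θ⟩ ) − ( max_{θ'∈Θ'}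 clip_{[0,H]}⟨u, θ'⟩ − min_{θ'∈Θ'} clip_{[0,H]}⟨u, θ'⟩ ) | ≤ 2c·‖u‖_{X⁻¹}. -/
open Matrix Finset

/-- Clipping to the interval `[0, H]`. -/
noncomputable def clip (H x : ℝ) : ℝ := max 0 (min H x)

/-!
Since `u ⬝ᵥ v = u ⬝ᵥ X⁻¹ *ᵥ (X *ᵥ v)` and `‖X *ᵥ v‖_{X⁻¹} = ‖v‖_X`, Cauchy–Schwarz for the
form of `X⁻¹` gives `|⟨u, θ⟩ - ⟨u, θ'⟩| ≤ ‖u‖_{X⁻¹} ‖θ - θ'‖_X`. So `θ ↦ ⟨u, θ⟩`, and its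
composite with the 1-Lipschitz clip, take mutually `c ‖u‖_{X⁻¹}`-close values on `Θ` and `Θ'`,
and mutually `ε`-close bounded sets of reals have `ε`-close suprema and infima.
-/

theorem abs_dotProduct_mulVec_le_mnorm_mul_mnorm {d : ℕ} {M : Matrix (Fin d) (Fin d) ℝ}
    (hM : M.PosSemidef) (x y : Fin d → ℝ) : |x ⬝ᵥ M *ᵥ y| ≤ mnorm M x * mnorm M y := by
  let := M.toSeminormedAddCommGroup hM
  let := M.toInnerProductSpace hM
  have hinner (a b : Fin d → ℝ) : inner ℝ a b = a ⬝ᵥ M *ᵥ b := by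
    change (M *ᵥ b) ⬝ᵥ star a = _
    simp only [star_trivial, dotProduct_comm]
  have hcs := real_inner_mul_inner_self_le x y
  simp only [hinner] at hcs
  have hx : 0 ≤ x ⬝ᵥ M *ᵥ x := by simpa only [star_trivial] using hM.dotProduct_mulVec_nonneg x
  rw [mnorm, mnorm, ← Real.sqrt_mul hx, ← Real.sqrt_mul_self_eq_abs]
  exact Real.sqrt_le_sqrt hcs

theorem abs_dotProduct_le_mnorm_inv_mul_mnorm {d : ℕ} {X : Matrix (Fin d) (Fin d) ℝ}
    (hX : X.PosDef) (u v : Fin d → ℝ) : |u ⬝ᵥ v| ≤ mnorm X⁻¹ u * mnorm X v := by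
  have hv : X⁻¹ *ᵥ X *ᵥ v = v := by
    rw [mulVec_mulVec, nonsing_inv_mul _ ((isUnit_iff_isUnit_det X).1 hX.isUnit), one_mulVec]
  have hXv : mnorm X⁻¹ (X *ᵥ v) = mnorm X v := by rw [mnorm, mnorm, hv, dotProduct_comm]
  simpa only [hv, hXv] using
    abs_dotProduct_mulVec_le_mnorm_mul_mnorm hX.inv.posSemidef u (X *ᵥ v)

theorem abs_dotProduct_sub_le_of_mnorm_sub_le {d : ℕ} {X : Matrix (Fin d) (Fin d) ℝ}
    (hX : X.PosDef) (u : Fin d → ℝ) {θ θ' : Fin d → ℝ} {c : ℝ} (h : mnorm X (θ - θ') ≤ c) :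
    |u ⬝ᵥ θ - u ⬝ᵥ θ'| ≤ c * mnorm X⁻¹ u :=
  calc |u ⬝ᵥ θ - u ⬝ᵥ θ'| = |u ⬝ᵥ (θ - θ')| := by rw [dotProduct_sub]
    _ ≤ mnorm X⁻¹ u * mnorm X (θ - θ') := abs_dotProduct_le_mnorm_inv_mul_mnorm hX u _
    _ ≤ mnorm X⁻¹ u * c := mul_le_mul_of_nonneg_left h (Real.sqrt_nonneg _)
    _ = c * mnorm X⁻¹ u := mul_comm _ _

theorem lipschitzWith_clip (H : ℝ) : LipschitzWith 1 (clip H) :=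
  (LipschitzWith.id.const_min H).const_max 0

section CloseSets

variable {A B : Set ℝ} {ε : ℝ}

theorem csSup_le_csSup_add (hA : A.Nonempty) (hB : BddAbove B)
    (h : ∀ a ∈ A, ∃ b ∈ B, a ≤ b + ε) : sSup A ≤ sSup B + ε :=
  csSup_le hA fun a ha =>
    let ⟨_, hb, hab⟩ := h a ha
    hab.trans (add_le_add_left (le_csSup hB hb) ε)

theorem csInf_le_csInf_add (hA : A.Nonempty) (hB : BddBelow B)
    (h : ∀ a ∈ A, ∃ b ∈ B, b ≤ a + ε) : sInf B ≤ sInf A + ε :=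
  sub_le_iff_le_add.1 <| le_csInf hA fun a ha =>
    let ⟨_, hb, hba⟩ := h a ha
    sub_le_iff_le_add.2 ((csInf_le hB hb).trans hba)

theorem abs_csSup_sub_csSup_le (hA : A.Nonempty) (hB : B.Nonempty)
    (hAb : BddAbove A) (hBb : BddAbove B)
    (hAB : ∀ a ∈ A, ∃ b ∈ B, |a - b| ≤ ε) (hBA : ∀ b ∈ B, ∃ a ∈ A, |a - b| ≤ ε) :
    |sSup A - sSup B| ≤ ε := by
  refine abs_sub_le_iff.2 ⟨sub_le_iff_le_add'.2 ?_, sub_le_iff_le_add'.2 ?_⟩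
  · refine csSup_le_csSup_add hA hBb fun a ha => ?_
    obtain ⟨b, hb, hab⟩ := hAB a ha
    exact ⟨b, hb, sub_le_iff_le_add'.1 (abs_sub_le_iff.1 hab).1⟩
  · refine csSup_le_csSup_add hB hAb fun b hb => ?_
    obtain ⟨a, ha, hab⟩ := hBA b hb
    exact ⟨a, ha, sub_le_iff_le_add'.1 (abs_sub_le_iff.1 hab).2⟩

theorem abs_csInf_sub_csInf_le (hA : A.Nonempty) (hB : B.Nonempty)
    (hAb : BddBelow A) (hBb : BddBelow B)
    (hAB : ∀ a ∈ A, ∃ b ∈ B, |a - b| ≤ ε) (hBA : ∀ b ∈ B, ∃ a ∈ A, |a - b| ≤ ε) :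
    |sInf A - sInf B| ≤ ε := by
  refine abs_sub_le_iff.2 ⟨sub_le_iff_le_add'.2 ?_, sub_le_iff_le_add'.2 ?_⟩
  · refine csInf_le_csInf_add hB hAb fun b hb => ?_
    obtain ⟨a, ha, hab⟩ := hBA b hb
    exact ⟨a, ha, sub_le_iff_le_add'.1 (abs_sub_le_iff.1 hab).1⟩
  · refine csInf_le_csInf_add hA hBb fun a ha => ?_
    obtain ⟨b, hb, hab⟩ := hAB a ha
    exact ⟨b, hb, sub_le_iff_le_add'.1 (abs_sub_le_iff.1 hab).2⟩

end CloseSets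

theorem IsCompact.abs_sSup_sInf_image_sub_le {α : Type*} [TopologicalSpace α] {f : α → ℝ}
    (hf : Continuous f) {S T : Set α} (hS : IsCompact S) (hT : IsCompact T)
    (hSne : S.Nonempty) (hTne : T.Nonempty) {ε : ℝ}
    (hST : ∀ s ∈ S, ∃ t ∈ T, |f s - f t| ≤ ε) (hTS : ∀ t ∈ T, ∃ s ∈ S, |f s - f t| ≤ ε) :
    |sSup (f '' S) - sSup (f '' T)| ≤ ε ∧ |sInf (f '' S) - sInf (f '' T)| ≤ ε := by
  have hfS := hS.image hf
  have hfT := hT.image hf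
  have hAB : ∀ a ∈ f '' S, ∃ b ∈ f '' T, |a - b| ≤ ε := by
    simpa only [Set.forall_mem_image, Set.exists_mem_image] using hST
  have hBA : ∀ b ∈ f '' T, ∃ a ∈ f '' S, |a - b| ≤ ε := by
    simpa only [Set.forall_mem_image, Set.exists_mem_image] using hTS
  exact ⟨abs_csSup_sub_csSup_le (hSne.image f) (hTne.image f) hfS.bddAbove hfT.bddAbove hAB hBA,
    abs_csInf_sub_csInf_le (hSne.image f) (hTne.image f) hfS.bddBelow hfT.bddBelow hAB hBA⟩

theorem confidence_set_value_closeness_general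
    {d : ℕ} (c : ℝ)
    (X : Matrix (Fin d) (Fin d) ℝ) (hX : X.PosDef)
    (Θ Θ' : Set (Fin d → ℝ))
    (hΘne : Θ.Nonempty) (hΘ'ne : Θ'.Nonempty)
    (hΘcpt : IsCompact Θ) (hΘ'cpt : IsCompact Θ')
    (hforward : ∀ θ ∈ Θ, ∃ θ' ∈ Θ', mnorm X (θ - θ') ≤ c)
    (hbackward : ∀ θ' ∈ Θ', ∃ θ ∈ Θ, mnorm X (θ - θ') ≤ c) :
    ∀ u : Fin d → ℝ,
      |sSup ((fun θ => u ⬝ᵥ θ) '' Θ) - sSup ((fun θ => u ⬝ᵥ θ) '' Θ')| ≤ c * mnorm X⁻¹ u ∧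
      |sInf ((fun θ => u ⬝ᵥ θ) '' Θ) - sInf ((fun θ => u ⬝ᵥ θ) '' Θ')| ≤ c * mnorm X⁻¹ u ∧
      ∀ H : ℝ, 0 ≤ H →
        |(sSup ((fun θ => clip H (u ⬝ᵥ θ)) '' Θ) - sInf ((fun θ => clip H (u ⬝ᵥ θ)) '' Θ))
          - (sSup ((fun θ => clip H (u ⬝ᵥ θ)) '' Θ') - sInf ((fun θ => clip H (u ⬝ᵥ θ)) '' Θ'))|
          ≤ 2 * c * mnorm X⁻¹ u := by
  intro u
  have hu : Continuous fun θ : Fin d → ℝ => u ⬝ᵥ θ := continuous_const.dotProduct continuous_id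
  have hclose (g : (Fin d → ℝ) → ℝ) (hg : Continuous g)
      (hgu : ∀ θ θ', |g θ - g θ'| ≤ |u ⬝ᵥ θ - u ⬝ᵥ θ'|) :
      |sSup (g '' Θ) - sSup (g '' Θ')| ≤ c * mnorm X⁻¹ u ∧
        |sInf (g '' Θ) - sInf (g '' Θ')| ≤ c * mnorm X⁻¹ u := by
    have hgc {θ θ'} (h : mnorm X (θ - θ') ≤ c) : |g θ - g θ'| ≤ c * mnorm X⁻¹ u :=
      (hgu θ θ').trans (abs_dotProduct_sub_le_of_mnorm_sub_le hX u h)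
    refine hΘcpt.abs_sSup_sInf_image_sub_le hg hΘ'cpt hΘne hΘ'ne (fun θ hθ => ?_) fun θ' hθ' => ?_
    · obtain ⟨θ', hθ', h⟩ := hforward θ hθ
      exact ⟨θ', hθ', hgc h⟩
    · obtain ⟨θ, hθ, h⟩ := hbackward θ' hθ'
      exact ⟨θ, hθ, hgc h⟩
  obtain ⟨hsup, hinf⟩ := hclose _ hu fun _ _ => le_rfl
  refine ⟨hsup, hinf, fun H _ => ?_⟩
  obtain ⟨hsup_clip, hinf_clip⟩ := hclose (fun θ => clip H (u ⬝ᵥ θ))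
    ((lipschitzWith_clip H).continuous.comp hu) fun θ θ' => by
      simpa only [Real.dist_eq, NNReal.coe_one, one_mul] using
        (lipschitzWith_clip H).dist_le_mul (u ⬝ᵥ θ) (u ⬝ᵥ θ')
  rw [abs_le] at hsup_clip hinf_clip ⊢
  constructor <;> linarith

/-- If the nonempty compact sets `Θ` and `Θ'` are mutually `c`-close in the
`‖·‖_X` norm, then for any vector `u` their maxima, minima, and clipped
max-minus-min gaps of `θ ↦ ⟨u, θ⟩` are close, at scale `c‖u‖_{X⁻¹}`.
(The maxima/minima, attained by compactness, are expressed via `sSup`/`sInf`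
of the image sets.) -/
theorem confidence_set_value_closeness
    {d : ℕ} (hd : 1 ≤ d) (c : ℝ) (hc : 0 ≤ c)
    (X : Matrix (Fin d) (Fin d) ℝ) (hX : X.PosDef)
    (Θ Θ' : Set (Fin d → ℝ))
    (hΘne : Θ.Nonempty) (hΘ'ne : Θ'.Nonempty)
    (hΘcpt : IsCompact Θ) (hΘ'cpt : IsCompact Θ')
    (hforward : ∀ θ ∈ Θ, ∃ θ' ∈ Θ', mnorm X (θ - θ') ≤ c)
    (hbackward : ∀ θ' ∈ Θ', ∃ θ ∈ Θ, mnorm X (θ - θ') ≤ c) :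
    ∀ u : Fin d → ℝ,
      |sSup ((fun θ => u ⬝ᵥ θ) '' Θ) - sSup ((fun θ => u ⬝ᵥ θ) '' Θ')| ≤ c * mnorm X⁻¹ u ∧
      |sInf ((fun θ => u ⬝ᵥ θ) '' Θ) - sInf ((fun θ => u ⬝ᵥ θ) '' Θ')| ≤ c * mnorm X⁻¹ u ∧
      ∀ H : ℝ, 0 ≤ H →
        |(sSup ((fun θ => clip H (u ⬝ᵥ θ)) '' Θ) - sInf ((fun θ => clip H (u ⬝ᵥ θ)) '' Θ))
          - (sSup ((fun θ => clip H (u ⬝ᵥ θ)) '' Θ') - sInf ((fun θ => clip H (u ⬝ᵥ θ)) '' Θ'))|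
          ≤ 2 * c * mnorm X⁻¹ u :=
  confidence_set_value_closeness_general c X hX Θ Θ' hΘne hΘ'ne hΘcpt hΘ'cpt hforward hbackward
end
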